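/- arXiv:2504.14517 — 3 statements merged into one kernel-verified Lean document; each statement's English description precedes it below -/
import Mathlib

section
/- Let V be an sp_N-module and define J_H(V) = {v ∈ V : (r r̄^T)^2 v = 0 for all r ∈ Z^N}. Then J_H(V) is an sp_N-submodule of V. -/
open Matrix

attribute [local instance 100] LieRing.ofAssociativeRing

/-- The standard symplectic matrix `J` for `N = 2n`. -/
noncomputable def Jmat (n : ℕ) : Matrix (Fin n ⊕ Fin n) (Fin n ⊕ Fin n) ℂ :=
  Matrix.fromBlocks 0 1 (-1) 0

/-- The symplectic Lie algebra `sp_N = {A : Aᵀ J + J A = 0}` as a Lie subalgebra of matrices. -/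
noncomputable def sp (n : ℕ) : LieSubalgebra ℂ (Matrix (Fin n ⊕ Fin n) (Fin n ⊕ Fin n) ℂ) :=
  skewAdjointMatricesLieSubalgebra (Jmat n)

/-!
Write `q(x) = x x̄ᵀ` and `b(x, z) = x z̄ᵀ + z x̄ᵀ` for its polar form. For `X = q(r)` and
`Y ∈ sp_N` the Leibniz rule gives `X² (Y v) = Y (X² v) + (X B + B X) v` with `B = [X, Y]`, and a
direct computation shows `B = b(r, -Y r)`. If `q(x)² v = 0` for all integral `x`, expanding
`q(r + t s)² v = 0` at `t = ±1, ±2` isolates the coefficient of `t`: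
`(X b(r, s) + b(r, s) X) v = 0` for integral `s`. This is linear in `s`, and integral vectors
span `ℂ^N`, so it also holds for `s = -Y r`.
-/

namespace Matrix

variable {ι R : Type*} [Fintype ι] [CommRing R] {J : Matrix ι ι R}

theorem transpose_vecMulVec_mulVec_mul (hJ : Jᵀ = -J) (x y : ι → R) :
    (vecMulVec x (J *ᵥ y))ᵀ * J = J * -vecMulVec y (J *ᵥ x) := by
  rw [transpose_vecMulVec, vecMulVec_mul, mul_neg, mul_vecMulVec, ← mulVec_transpose, hJ,
    neg_mulVec, vecMulVec_neg]

variable [DecidableEq ι]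

theorem vecMulVec_mulVec_mem_skewAdjointMatricesLieSubalgebra (hJ : Jᵀ = -J) (x : ι → R) :
    vecMulVec x (J *ᵥ x) ∈ skewAdjointMatricesLieSubalgebra J := by
  rw [mem_skewAdjointMatricesLieSubalgebra, mem_skewAdjointMatricesSubmodule]
  exact transpose_vecMulVec_mulVec_mul hJ x x

/-- `x ↦ x (J x)ᵀ`; for `J = Jmat n` this is the paper's `r ↦ r r̄ᵀ`. -/
noncomputable def skewRankOneQuadraticMap (hJ : Jᵀ = -J) :
    QuadraticMap R (ι → R) (skewAdjointMatricesLieSubalgebra J) :=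
  .ofPolar (fun x ↦ ⟨_, vecMulVec_mulVec_mem_skewAdjointMatricesLieSubalgebra hJ x⟩)
    (fun a x ↦ by ext1; simp [mulVec_smul, smul_vecMulVec, vecMulVec_smul, smul_smul])
    (fun x x' y ↦ by
      ext1
      simp only [QuadraticMap.polar, AddSubgroupClass.coe_sub, AddMemClass.coe_add, mulVec_add,
        add_vecMulVec, vecMulVec_add]
      abel)
    (fun a x y ↦ by
      ext1
      simp only [QuadraticMap.polar, AddSubgroupClass.coe_sub, SetLike.val_smul, mulVec_add,
        add_vecMulVec, vecMulVec_add, mulVec_smul, smul_vecMulVec, vecMulVec_smul]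
      module)

theorem coe_skewRankOneQuadraticMap (hJ : Jᵀ = -J) (x : ι → R) :
    (skewRankOneQuadraticMap hJ x : Matrix ι ι R) = vecMulVec x (J *ᵥ x) := rfl

theorem coe_polar_skewRankOneQuadraticMap (hJ : Jᵀ = -J) (x y : ι → R) :
    ((QuadraticMap.polar (skewRankOneQuadraticMap hJ) x y : skewAdjointMatricesLieSubalgebra J) :
      Matrix ι ι R) =
      vecMulVec x (J *ᵥ y) + vecMulVec y (J *ᵥ x) := by
  simp only [QuadraticMap.polar, AddSubgroupClass.coe_sub, coe_skewRankOneQuadraticMap, mulVec_add,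
    add_vecMulVec, vecMulVec_add]
  abel

theorem lie_skewRankOneQuadraticMap (hJ : Jᵀ = -J) (x : ι → R)
    (A : skewAdjointMatricesLieSubalgebra J) :
    ⁅skewRankOneQuadraticMap hJ x, A⁆ =
      QuadraticMap.polar (skewRankOneQuadraticMap hJ) x (-((A : Matrix ι ι R) *ᵥ x)) := by
  have hA : (A : Matrix ι ι R)ᵀ * J = J * -A :=
    (mem_skewAdjointMatricesSubmodule J _).1 A.2
  have hJA : (J *ᵥ x) ᵥ* (A : Matrix ι ι R) = J *ᵥ -((A : Matrix ι ι R) *ᵥ x) := by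
    rw [← mulVec_transpose, mulVec_mulVec, hA, ← mulVec_mulVec, neg_mulVec, mulVec_neg]
  ext1
  rw [LieSubalgebra.coe_bracket, coe_polar_skewRankOneQuadraticMap, Ring.lie_def,
    coe_skewRankOneQuadraticMap, vecMulVec_mul, mul_vecMulVec, hJA, neg_vecMulVec]
  abel

end Matrix

theorem leibniz_lie_sq {L M : Type*} [LieRing L] [AddCommGroup M] [LieRingModule L M]
    (X Y : L) (v : M) :
    ⁅X, ⁅X, ⁅Y, v⁆⁆⁆ = ⁅X, ⁅⁅X, Y⁆, v⁆⁆ + ⁅⁅X, Y⁆, ⁅X, v⁆⁆ + ⁅Y, ⁅X, ⁅X, v⁆⁆⁆ := by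
  rw [leibniz_lie X Y v, lie_add, leibniz_lie X Y, add_assoc]

theorem eq_zero_of_forall_int_smul_add_pow_smul_eq_zero {K V : Type*} [Field K] [CharZero K]
    [AddCommGroup V] [Module K V] {c₁ c₂ c₃ c₄ : V}
    (h : ∀ t : ℤ, (t : K) • c₁ + (t : K) ^ 2 • c₂ + (t : K) ^ 3 • c₃ + (t : K) ^ 4 • c₄ = 0) :
    c₁ = 0 := by
  have h12 : (12 : K) • c₁ = 0 := by
    have e1 := h 1
    have e2 := h (-1)
    have e3 := h 2
    have e4 := h (-2)
    push_cast at e1 e2 e3 e4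
    linear_combination (norm := module) (8 : K) • e1 - (8 : K) • e2 - e3 + e4
  exact (smul_eq_zero.1 h12).resolve_left (by norm_num)

section Polarization

open QuadraticMap

variable {K E L M : Type*} [Field K] [CharZero K] [AddCommGroup E] [Module K E]
  [LieRing L] [LieAlgebra K L] [AddCommGroup M] [Module K M] [LieRingModule L M] [LieModule K L M]
  {Q : QuadraticMap K E L} {S : AddSubgroup E} {v : M}

theorem lie_lie_polar_add_lie_polar_lie_eq_zero (hv : ∀ x ∈ S, ⁅Q x, ⁅Q x, v⁆⁆ = 0) {x y : E}
    (hx : x ∈ S) (hy : y ∈ Submodule.span K (S : Set E)) :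
    ⁅Q x, ⁅polar Q x y, v⁆⁆ + ⁅polar Q x y, ⁅Q x, v⁆⁆ = 0 := by
  induction hy using Submodule.span_induction with
  | mem y hy =>
    have hQ (t : K) : Q (x + t • y) = Q x + t • polar Q x y + t ^ 2 • Q y := by
      rw [QuadraticMap.map_add (⇑Q), polar_smul_right, QuadraticMap.map_smul, _root_.sq]
      abel
    refine eq_zero_of_forall_int_smul_add_pow_smul_eq_zero (K := K)
      (c₂ := ⁅Q x, ⁅Q y, v⁆⁆ + ⁅polar Q x y, ⁅polar Q x y, v⁆⁆ + ⁅Q y, ⁅Q x, v⁆⁆)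
      (c₃ := ⁅polar Q x y, ⁅Q y, v⁆⁆ + ⁅Q y, ⁅polar Q x y, v⁆⁆) (c₄ := ⁅Q y, ⁅Q y, v⁆⁆)
      fun t ↦ ?_
    have hxy := hv _ (S.add_mem hx (Int.cast_smul_eq_zsmul K t y ▸ S.zsmul_mem hy t))
    simp only [hQ, add_lie, smul_lie, lie_add, lie_smul, hv x hx] at hxy
    linear_combination (norm := module) hxy
  | zero => simp
  | add y z _ _ hy hz =>
    simp only [polar_add_right, add_lie, lie_add]
    linear_combination (norm := module) hy + hz
  | smul a y _ hy =>
    rw [polar_smul_right, smul_lie, lie_smul, smul_lie, ← smul_add, hy, smul_zero]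

end Polarization

namespace LieSubmodule

open QuadraticMap

variable {K E L M : Type*} [Field K] [CharZero K] [AddCommGroup E] [Module K E]
  [LieRing L] [LieAlgebra K L] [AddCommGroup M] [Module K M] [LieRingModule L M] [LieModule K L M]

def sqKernel (Q : QuadraticMap K E L) (S : AddSubgroup E)
    (hQ : ∀ x ∈ S, ∀ Y : L, ∃ z ∈ Submodule.span K (S : Set E), ⁅Q x, Y⁆ = polar Q x z) :
    LieSubmodule K L M where
  carrier := {v | ∀ x ∈ S, ⁅Q x, ⁅Q x, v⁆⁆ = 0}
  zero_mem' := by simp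
  add_mem' hv hw x hx := by rw [lie_add, lie_add, hv x hx, hw x hx, add_zero]
  smul_mem' a v hv x hx := by rw [lie_smul, lie_smul, hv x hx, smul_zero]
  lie_mem {Y v} hv x hx := by
    obtain ⟨z, hz, hXY⟩ := hQ x hx Y
    rw [leibniz_lie_sq, hXY, hv x hx, lie_zero, add_zero]
    exact lie_lie_polar_add_lie_polar_lie_eq_zero hv hx hz

end LieSubmodule

def intLattice (ι R : Type*) [Ring R] : AddSubgroup (ι → R) :=
  (AddMonoidHom.compLeft (Int.castAddHom R) ι).range

theorem span_intLattice (ι R : Type*) [Finite ι] [Ring R] :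
    Submodule.span R (intLattice ι R : Set (ι → R)) = ⊤ := by
  classical
  rw [eq_top_iff, ← (Pi.basisFun R ι).span_eq]
  refine Submodule.span_mono (Set.range_subset_iff.2 fun i ↦ ⟨Pi.single i 1, ?_⟩)
  ext j
  simp [Pi.single_apply]

theorem Jmat_transpose (n : ℕ) : (Jmat n)ᵀ = -Jmat n := by
  simp [Jmat, fromBlocks_transpose, fromBlocks_neg]

open Matrix LieSubmodule in
/-- For an `sp_N`-module `V`, the set `J_H(V) = {v : (r r̄^T)² v = 0 for all r ∈ ℤ^N}` is an
`sp_N`-submodule of `V`. -/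
theorem JH_is_submodule (n : ℕ) (V : Type*) [AddCommGroup V] [Module ℂ V]
    [LieRingModule ↥(sp n) V] [LieModule ℂ ↥(sp n) V] :
    ∃ W : LieSubmodule ℂ ↥(sp n) V, (W : Set V) =
      {v : V | ∀ (r : Fin n ⊕ Fin n → ℤ) (X : ↥(sp n)),
        (X : Matrix (Fin n ⊕ Fin n) (Fin n ⊕ Fin n) ℂ)
          = Matrix.vecMulVec (fun i => (r i : ℂ)) ((Jmat n).mulVec fun i => (r i : ℂ)) →
        ⁅X, ⁅X, v⁆⁆ = 0} := by
  let Q : QuadraticMap ℂ _ (sp n) := skewRankOneQuadraticMap (Jmat_transpose n)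
  refine ⟨sqKernel Q (intLattice (Fin n ⊕ Fin n) ℂ) fun x _ Y ↦
    ⟨_, span_intLattice (Fin n ⊕ Fin n) ℂ ▸ Submodule.mem_top,
      lie_skewRankOneQuadraticMap _ x Y⟩, ?_⟩
  ext v
  refine ⟨fun hv r X hX ↦ ?_, fun hv _ ⟨r, hr⟩ ↦ hr ▸ hv r _ rfl⟩
  obtain rfl : X = Q _ := Subtype.ext hX
  exact hv _ ⟨r, rfl⟩
end

section
/- Let g = gl_N(C) and define for an irreducible g-module V the set J_W(V) = {v ∈ V : (r u^T)^2 v = (u|r)(r u^T) v for all u ∈ C^N, r ∈ Z^N}. Then J_W(V) is a g-submodule of V. -/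
open Matrix

attribute [local instance 100] LieRing.ofAssociativeRing

/-!
For `v ∈ J_W(V)` the quadratic map `A ↦ A²v - tr(A) Av` vanishes on the integral rank-one
matrices `A = r uᵀ` (note `tr (r uᵀ) = (u|r)`). Polarizing in `u`, and in `r` (then extending
from integral to arbitrary `r` by linearity, since the standard basis is integral), the polar form
`b_v(A, B)` vanishes whenever `B` shares a factor with `A`. The Leibniz rule gives
`A²(xv) - tr(A) A(xv) = x(A²v - tr(A) Av) + b_v(A, [A, x]) + tr([A, x]) Av`, and
`[r uᵀ, x] = r (uᵀx) - (xr) uᵀ` is traceless and a difference of two such `B`.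
-/

section SquareDefect

open LieModule

variable {R L V : Type*} [CommRing R] [LieRing L] [LieAlgebra R L]
  [AddCommGroup V] [Module R V] [LieRingModule L V] [LieModule R L V]

def lieSqDefect (τ : L →ₗ[R] R) (A : L) : Module.End R V :=
  toEnd R L V A ^ 2 - τ A • toEnd R L V A

@[simp]
lemma lieSqDefect_apply (τ : L →ₗ[R] R) (A : L) (v : V) :
    lieSqDefect τ A v = ⁅A, ⁅A, v⁆⁆ - τ A • ⁅A, v⁆ := by
  simp [lieSqDefect, pow_two]

def lieSqPolar (τ : L →ₗ[R] R) (v : V) (A : L) : L →ₗ[R] V where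
  toFun B := ⁅A, ⁅B, v⁆⁆ + ⁅B, ⁅A, v⁆⁆ - τ A • ⁅B, v⁆ - τ B • ⁅A, v⁆
  map_add' B C := by
    simp only [add_lie, lie_add, smul_add, map_add, add_smul]
    abel
  map_smul' c B := by
    simp only [smul_lie, lie_smul, map_smul, smul_eq_mul, mul_smul, smul_sub, smul_add,
      RingHom.id_apply]
    rw [smul_comm c (τ A)]

lemma lieSqDefect_add (τ : L →ₗ[R] R) (A B : L) (v : V) :
    lieSqDefect τ (A + B) v = lieSqDefect τ A v + lieSqDefect τ B v + lieSqPolar τ v A B := by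
  simp only [lieSqDefect_apply, lieSqPolar, LinearMap.coe_mk, AddHom.coe_mk, add_lie, lie_add,
    map_add, add_smul, smul_add]
  abel

lemma lieSqPolar_eq_zero {τ : L →ₗ[R] R} {A B : L} {v : V} (hA : lieSqDefect τ A v = 0)
    (hB : lieSqDefect τ B v = 0) (hAB : lieSqDefect τ (A + B) v = 0) :
    lieSqPolar τ v A B = 0 := by
  rwa [lieSqDefect_add, hA, hB, zero_add, zero_add] at hAB

lemma lieSqDefect_lie (τ : L →ₗ[R] R) (A x : L) (v : V) :
    lieSqDefect τ A ⁅x, v⁆ =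
      ⁅x, lieSqDefect τ A v⁆ + lieSqPolar τ v A ⁅A, x⁆ + τ ⁅A, x⁆ • ⁅A, v⁆ := by
  simp only [lieSqDefect_apply, lieSqPolar, LinearMap.coe_mk, AddHom.coe_mk, leibniz_lie A x,
    lie_add, lie_sub, lie_smul, smul_add]
  abel

end SquareDefect

section RankOne

variable {R n V : Type*} [CommRing R] [Fintype n] [DecidableEq n]
  [AddCommGroup V] [Module R V] [LieRingModule (Matrix n n R) V] [LieModule R (Matrix n n R) V]

lemma Matrix.vecMulVec_lie (w u : n → R) (M : Matrix n n R) :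
    ⁅vecMulVec w u, M⁆ = vecMulVec w (u ᵥ* M) - vecMulVec (M *ᵥ w) u := by
  rw [Ring.lie_def, vecMulVec_mul, mul_vecMulVec]

variable (R n V) in
/-- The paper's `J_W(V)`. -/
def intRankOneSqSubmodule : Submodule R V :=
  ⨅ (u : n → R) (r : n → ℤ),
    LinearMap.ker (lieSqDefect (traceLinearMap n R R) (vecMulVec (fun i => (r i : R)) u))

lemma mem_intRankOneSqSubmodule {v : V} : v ∈ intRankOneSqSubmodule R n V ↔
    ∀ (u : n → R) (r : n → ℤ),
      lieSqDefect (traceLinearMap n R R) (vecMulVec (fun i => (r i : R)) u) v = 0 := by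
  simp only [intRankOneSqSubmodule, Submodule.mem_iInf, LinearMap.mem_ker]

section Member

variable {v : V} (hv : v ∈ intRankOneSqSubmodule R n V)
include hv

lemma lieSqPolar_vecMulVec_common_left (r : n → ℤ) (u w : n → R) :
    lieSqPolar (traceLinearMap n R R) v (vecMulVec (fun i => (r i : R)) u)
      (vecMulVec (fun i => (r i : R)) w) = 0 := by
  rw [mem_intRankOneSqSubmodule] at hv
  exact lieSqPolar_eq_zero (hv u r) (hv w r) (by rw [← vecMulVec_add]; exact hv (u + w) r)

lemma lieSqPolar_vecMulVec_common_right (r : n → ℤ) (u s : n → R) :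
    lieSqPolar (traceLinearMap n R R) v (vecMulVec (fun i => (r i : R)) u) (vecMulVec s u) = 0 := by
  rw [mem_intRankOneSqSubmodule] at hv
  have h_int (r' : n → ℤ) : lieSqPolar (traceLinearMap n R R) v (vecMulVec (fun i => (r i : R)) u)
      (vecMulVec (fun i => (r' i : R)) u) = 0 := by
    refine lieSqPolar_eq_zero (hv u r) (hv u r') ?_
    rw [← add_vecMulVec, Pi.add_def]
    simpa only [Pi.add_apply, Int.cast_add] using hv u (r + r')
  have h_comp : (lieSqPolar (traceLinearMap n R R) v (vecMulVec (fun i => (r i : R)) u)).comp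
      ((vecMulVecBilin R R).flip u) = 0 := by
    refine (Pi.basisFun R n).ext fun i => ?_
    have h_single : (fun j => ((Pi.single i 1 : n → ℤ) j : R)) = Pi.basisFun R n i := by
      ext j
      by_cases hj : j = i <;> simp [hj]
    simpa [h_single] using h_int (Pi.single i 1)
  exact LinearMap.congr_fun h_comp s

lemma lie_mem_intRankOneSqSubmodule (x : Matrix n n R) :
    ⁅x, v⁆ ∈ intRankOneSqSubmodule R n V := by
  rw [mem_intRankOneSqSubmodule]
  intro u r
  rw [lieSqDefect_lie, (mem_intRankOneSqSubmodule.mp hv) u r, traceLinearMap_apply,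
    LieAlgebra.matrix_trace_commutator_zero, vecMulVec_lie, map_sub,
    lieSqPolar_vecMulVec_common_left hv, lieSqPolar_vecMulVec_common_right hv]
  simp

end Member

variable (R n V) in
def intRankOneSqLieSubmodule : LieSubmodule R (Matrix n n R) V :=
  { intRankOneSqSubmodule R n V with lie_mem := fun hv => lie_mem_intRankOneSqSubmodule hv _ }

end RankOne

theorem JW_is_submodule_general (N : ℕ) (V : Type*) [AddCommGroup V] [Module ℂ V]
    [LieRingModule (Matrix (Fin N) (Fin N) ℂ) V]
    [LieModule ℂ (Matrix (Fin N) (Fin N) ℂ) V] :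
    ∃ W : LieSubmodule ℂ (Matrix (Fin N) (Fin N) ℂ) V, (W : Set V) =
      {v : V | ∀ (u : Fin N → ℂ) (r : Fin N → ℤ),
        ⁅(Matrix.vecMulVec (fun i => (r i : ℂ)) u : Matrix (Fin N) (Fin N) ℂ),
          ⁅(Matrix.vecMulVec (fun i => (r i : ℂ)) u : Matrix (Fin N) (Fin N) ℂ), v⁆⁆
        = (u ⬝ᵥ fun i => (r i : ℂ)) •
            ⁅(Matrix.vecMulVec (fun i => (r i : ℂ)) u : Matrix (Fin N) (Fin N) ℂ), v⁆} := by
  refine ⟨intRankOneSqLieSubmodule ℂ (Fin N) V, Set.ext fun v => ?_⟩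
  change v ∈ intRankOneSqSubmodule ℂ (Fin N) V ↔ _
  simp only [mem_intRankOneSqSubmodule, lieSqDefect_apply, traceLinearMap_apply, trace_vecMulVec,
    sub_eq_zero, dotProduct_comm, Set.mem_ofPred_eq]

/-- Let `g = gl_N(ℂ)` and `V` an irreducible `g`-module. The set
`J_W(V) = {v : (r u^T)² v = (u|r)(r u^T) v for all u ∈ ℂ^N, r ∈ ℤ^N}` is a `g`-submodule
of `V`. -/
theorem JW_is_submodule (N : ℕ) (V : Type*) [AddCommGroup V] [Module ℂ V]
    [LieRingModule (Matrix (Fin N) (Fin N) ℂ) V]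
    [LieModule ℂ (Matrix (Fin N) (Fin N) ℂ) V]
    [LieModule.IsIrreducible ℂ (Matrix (Fin N) (Fin N) ℂ) V] :
    ∃ W : LieSubmodule ℂ (Matrix (Fin N) (Fin N) ℂ) V, (W : Set V) =
      {v : V | ∀ (u : Fin N → ℂ) (r : Fin N → ℤ),
        ⁅(Matrix.vecMulVec (fun i => (r i : ℂ)) u : Matrix (Fin N) (Fin N) ℂ),
          ⁅(Matrix.vecMulVec (fun i => (r i : ℂ)) u : Matrix (Fin N) (Fin N) ℂ), v⁆⁆
        = (u ⬝ᵥ fun i => (r i : ℂ)) •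
            ⁅(Matrix.vecMulVec (fun i => (r i : ℂ)) u : Matrix (Fin N) (Fin N) ℂ), v⁆} :=
  JW_is_submodule_general N V
end

section
/- For every 0 ≤ k ≤ N, every r ∈ Z^N, and every u ∈ C^N, the derivation action of r u^T on Λ^k C^N satisfies (r u^T)^2 = (u|r)·(r u^T) as operators on Λ^k C^N. -/
open Matrix

section Aux

variable {N : ℕ}

private lemma aux_anticomm (v : Fin N → ℂ) :
    ∀ (n : ℕ) (z : ExteriorAlgebra ℂ (Fin N → ℂ)),
      z ∈ (LinearMap.range (ExteriorAlgebra.ι ℂ (M := Fin N → ℂ))) ^ n →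
      ExteriorAlgebra.ι ℂ v * z = ((-1 : ℂ) ^ n) • (z * ExteriorAlgebra.ι ℂ v) := by
  intro n z hz
  induction hz using Submodule.pow_induction_on_left' with
  | algebraMap c =>
      simp [Algebra.commutes]
  | add x y i hx hy ihx ihy =>
      simp [mul_add, add_mul, ihx, ihy, smul_add]
  | mem_mul m hm i x hx ih =>
      obtain ⟨w, rfl⟩ := hm
      have h1 : ExteriorAlgebra.ι ℂ v * ExteriorAlgebra.ι ℂ w =
          -(ExteriorAlgebra.ι ℂ w * ExteriorAlgebra.ι ℂ v) := by
        exact eq_neg_of_add_eq_zero_left (ExteriorAlgebra.ι_add_mul_swap (R := ℂ) v w)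
      calc ExteriorAlgebra.ι ℂ v * (ExteriorAlgebra.ι ℂ w * x)
          = (ExteriorAlgebra.ι ℂ v * ExteriorAlgebra.ι ℂ w) * x := by rw [mul_assoc]
        _ = -(ExteriorAlgebra.ι ℂ w * (ExteriorAlgebra.ι ℂ v * x)) := by
            rw [h1]; simp [mul_assoc]
        _ = -(ExteriorAlgebra.ι ℂ w * (((-1 : ℂ) ^ i) • (x * ExteriorAlgebra.ι ℂ v))) := by
            rw [ih]
        _ = ((-1 : ℂ) ^ (i + 1)) • (ExteriorAlgebra.ι ℂ w * x * ExteriorAlgebra.ι ℂ v) := by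
            rw [pow_succ]
            simp [mul_smul_comm, mul_assoc, smul_smul]

end Aux

/-- For every `0 ≤ k ≤ N`, `r ∈ ℤ^N` and `u ∈ ℂ^N`, the derivation action of `r u^T` on
`Λ^k ℂ^N` satisfies `(r u^T)² = (u|r) · (r u^T)` as operators on `Λ^k ℂ^N`. The derivation
action is formalized by any linear map `D` on the exterior algebra which is a derivation
extending the matrix action of `r u^T`. -/
theorem rank_one_derivation_sq (N : ℕ) (k : ℕ) (hk : k ≤ N)
    (r : Fin N → ℤ) (u : Fin N → ℂ)
    (D : ExteriorAlgebra ℂ (Fin N → ℂ) →ₗ[ℂ] ExteriorAlgebra ℂ (Fin N → ℂ))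
    (hD1 : ∀ a b, D (a * b) = D a * b + a * D b)
    (hD2 : ∀ w : Fin N → ℂ, D (ExteriorAlgebra.ι ℂ w) =
      ExteriorAlgebra.ι ℂ ((Matrix.vecMulVec (fun i => (r i : ℂ)) u).mulVec w)) :
    ∀ x ∈ ⋀[ℂ]^k (Fin N → ℂ), D (D x) = (u ⬝ᵥ fun i => (r i : ℂ)) • D x := by
  set rc : Fin N → ℂ := fun i => (r i : ℂ) with hrc
  set c : ℂ := u ⬝ᵥ rc with hc
  have hM : ∀ w : Fin N → ℂ,
      (Matrix.vecMulVec rc u).mulVec w = (u ⬝ᵥ w) • rc := by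
    intro w
    funext i
    simp [Matrix.mulVec, Matrix.vecMulVec, dotProduct, Finset.mul_sum, mul_assoc,
      mul_comm, mul_left_comm, smul_eq_mul]
  have hD2' : ∀ w : Fin N → ℂ, D (ExteriorAlgebra.ι ℂ w) =
      (u ⬝ᵥ w) • ExteriorAlgebra.ι ℂ rc := by
    intro w
    rw [hD2, hM, LinearMap.map_smul]
  have hD1' : D 1 = 0 := by
    have h := hD1 1 1
    simp at h
    exact h
  -- main induction
  have key : ∀ (n : ℕ) (x : ExteriorAlgebra ℂ (Fin N → ℂ)),
      x ∈ (LinearMap.range (ExteriorAlgebra.ι ℂ (M := Fin N → ℂ))) ^ n →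
      D x ∈ (LinearMap.range (ExteriorAlgebra.ι ℂ (M := Fin N → ℂ))) ^ n ∧
      D x * ExteriorAlgebra.ι ℂ rc = 0 ∧
      D (D x) = c • D x := by
    intro n x hx
    induction hx using Submodule.pow_induction_on_left' with
    | algebraMap a =>
        have h0 : D (algebraMap ℂ _ a) = 0 := by
          rw [Algebra.algebraMap_eq_smul_one, D.map_smul, hD1', smul_zero]
        simp [h0]
    | add x y i hx hy ihx ihy =>
        refine ⟨?_, ?_, ?_⟩
        · rw [map_add]; exact Submodule.add_mem _ ihx.1 ihy.1
        · rw [map_add, add_mul, ihx.2.1, ihy.2.1, add_zero]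
        · rw [map_add, map_add, ihx.2.2, ihy.2.2, smul_add]
    | mem_mul m hm i x hx ih =>
        obtain ⟨v, rfl⟩ := hm
        obtain ⟨ih1, ih2, ih3⟩ := ih
        have hrcmem : ExteriorAlgebra.ι ℂ rc ∈
            LinearMap.range (ExteriorAlgebra.ι ℂ (M := Fin N → ℂ)) := ⟨rc, rfl⟩
        have hDx_rc : ExteriorAlgebra.ι ℂ rc * D x = 0 := by
          rw [aux_anticomm rc i (D x) ih1, ih2, smul_zero]
        have hx_rc : ExteriorAlgebra.ι ℂ rc * x = ((-1 : ℂ) ^ i) • (x * ExteriorAlgebra.ι ℂ rc) :=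
          aux_anticomm rc i x hx
        have hDprod : D (ExteriorAlgebra.ι ℂ v * x) =
            (u ⬝ᵥ v) • (ExteriorAlgebra.ι ℂ rc * x) + ExteriorAlgebra.ι ℂ v * D x := by
          rw [hD1, hD2' v, smul_mul_assoc]
        refine ⟨?_, ?_, ?_⟩
        · rw [hDprod]
          exact Submodule.add_mem _
            (Submodule.smul_mem _ _ (by
              rw [pow_succ']
              exact Submodule.mul_mem_mul hrcmem hx))
            (by rw [pow_succ']; exact Submodule.mul_mem_mul ⟨v, rfl⟩ ih1)
        · have hsq : ExteriorAlgebra.ι ℂ rc * ExteriorAlgebra.ι ℂ rc = 0 := by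
            simpa using ExteriorAlgebra.ι_sq_zero (R := ℂ) rc
          rw [hDprod, add_mul, smul_mul_assoc, mul_assoc, mul_assoc, ih2, mul_zero, add_zero,
            ← mul_assoc, hx_rc, smul_mul_assoc, mul_assoc, hsq, mul_zero, smul_zero, smul_zero]
        · rw [hDprod, map_add, D.map_smul, hD1, hD1, hD2' rc, hD2' v, ih3, hDx_rc]
          simp only [smul_mul_assoc, mul_smul_comm, smul_add, smul_smul, hDx_rc, smul_zero,
            add_zero, zero_add]
          rw [hc]
          module
  intro x hx
  exact (key k x hx).2.2
end
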